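/- Let τ, q, θ₁ and H_{(a,b,c)} be as given, and set 𝔓(u) = H_{(−1/6, 1/6, 1/2)}(u) + H_{(1/6, −1/6, 1/2)}(u) + H_{(1/2, −1/6, 1/6)}(u). Then 𝔓 is constant: for all u, u′ ∈ ℂ at which θ₁(· − w) ≠ 0 for each w ∈ {−1/6, 1/6, 1/2}, one has 𝔓(u) = 𝔓(u′). -/

import Mathlib

/-- The Jacobi theta function
`θ₁(u) = 2·q^{1/8}·Σ_{k≥0} (−1)^k q^{k(k+1)/2}·sin(π(2k+1)u)`, with `q = exp(2πiτ)`. -/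
noncomputable def jacobiθ₁ (τ u : ℂ) : ℂ :=
  2 * Complex.exp (Real.pi * Complex.I * τ / 4) *
    ∑' k : ℕ, (-1 : ℂ) ^ k * Complex.exp (Real.pi * Complex.I * τ * k * (k + 1)) *
      Complex.sin (Real.pi * (2 * (k : ℂ) + 1) * u)

/-- `H_{(a,b,c)}(u) = i·e^{3πia}·θ₁(u − a)²/(θ₁(u − b)·θ₁(u − c))`. -/
noncomputable def Hfun (τ a b c u : ℂ) : ℂ :=
  Complex.I * Complex.exp (3 * Real.pi * Complex.I * a) * (jacobiθ₁ τ (u - a)) ^ 2 /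
    (jacobiθ₁ τ (u - b) * jacobiθ₁ τ (u - c))

/-- `𝔓(u) = H_{(−1/6,1/6,1/2)}(u) + H_{(1/6,−1/6,1/2)}(u) + H_{(1/2,−1/6,1/6)}(u)`. -/
noncomputable def Pfun (τ u : ℂ) : ℂ :=
  Hfun τ (-(1 / 6)) (1 / 6) (1 / 2) u + Hfun τ (1 / 6) (-(1 / 6)) (1 / 2) u +
    Hfun τ (1 / 2) (-(1 / 6)) (1 / 6) u

open Complex Real

lemma exp_pi_nat (k : ℕ) : cexp ((π : ℂ) * I * k) = (-1 : ℂ) ^ k := by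
  rw [show (π : ℂ) * I * k = (k : ℕ) * ((π:ℂ) * I) by push_cast; ring, Complex.exp_nat_mul,
    Complex.exp_pi_mul_I]

lemma exp_eq_neg (A B : ℂ) (n : ℤ) (h : A = B + (2 * n + 1) * ((π:ℂ) * I)) :
    cexp A = -cexp B := by
  rw [h, Complex.exp_add, show ((2 * (n:ℂ) + 1) * ((π:ℂ) * I)) = (n:ℂ) * (2 * (π:ℂ) * I) + (π:ℂ) * I
    by push_cast; ring, Complex.exp_add, Complex.exp_int_mul, Complex.exp_two_pi_mul_I, one_zpow,
    Complex.exp_pi_mul_I]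
  ring

lemma exp_eq_self (A B : ℂ) (n : ℤ) (h : A = B + (2 * n) * ((π:ℂ) * I)) :
    cexp A = cexp B := by
  rw [h, Complex.exp_add, show ((2 * (n:ℂ)) * ((π:ℂ) * I)) = (n:ℂ) * (2 * (π:ℂ) * I)
    by push_cast; ring, Complex.exp_int_mul, Complex.exp_two_pi_mul_I, one_zpow, mul_one]

private lemma comb (a b e y : ℂ) (h : a + b + e = y) :
    -I * cexp a * cexp b * cexp e = -(I * cexp y) := by
  rw [← h, Complex.exp_add, Complex.exp_add]; ring

lemma theta_eq_jacobiTheta₂ (τ u : ℂ) (hτ : 0 < τ.im) :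
    jacobiθ₁ τ u = -I * cexp ((π : ℂ) * I * τ / 4) * cexp ((π : ℂ) * I * u) *
      jacobiTheta₂ (u + (1 + τ) / 2) τ := by
  set z : ℂ := u + (1 + τ) / 2 with hz
  set c : ℂ := -I * cexp ((π : ℂ) * I * τ / 4) * cexp ((π : ℂ) * I * u) with hc
  have h0 : HasSum (fun n : ℤ => jacobiTheta₂_term n z τ) (jacobiTheta₂ z τ) :=
    hasSum_jacobiTheta₂_term z hτ
  have h1 := (h0.nat_add_neg_add_one).mul_left c
  have h2 : ∀ k : ℕ,
      c * (jacobiTheta₂_term (k : ℤ) z τ + jacobiTheta₂_term (-((k : ℤ) + 1)) z τ) =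
      2 * cexp ((π : ℂ) * I * τ / 4) *
        ((-1 : ℂ) ^ k * cexp ((π : ℂ) * I * τ * k * (k + 1)) *
          Complex.sin ((π : ℂ) * (2 * (k : ℂ) + 1) * u)) := by
    intro k
    set W1 : ℂ := (π:ℂ) * I * (k:ℂ) + (π:ℂ) * I * τ / 4 + (π:ℂ) * I * τ * (k:ℂ) * ((k:ℂ) + 1)
      with hW
    have e1 : c * jacobiTheta₂_term (k : ℤ) z τ
        = -(I * cexp (W1 + ((π:ℂ) * (2 * (k:ℂ) + 1) * u) * I)) := by
      rw [jacobiTheta₂_term, hc]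
      exact comb _ _ _ _ (by rw [hz, hW]; push_cast; ring)
    have e2 : c * jacobiTheta₂_term (-((k : ℤ) + 1)) z τ
        = I * cexp (W1 + (-((π:ℂ) * (2 * (k:ℂ) + 1) * u)) * I) := by
      have := comb ((π : ℂ) * I * τ / 4) ((π : ℂ) * I * u)
        (2 * (π:ℂ) * I * (-((k:ℂ) + 1)) * z + (π:ℂ) * I * (-((k:ℂ)+1)) ^ 2 * τ)
        ((W1 + (-((π:ℂ) * (2 * (k:ℂ) + 1) * u)) * I) + (2 * (-((k:ℤ)+1) : ℤ) + 1) * ((π:ℂ) * I))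
        (by rw [hz, hW]; push_cast; ring)
      rw [jacobiTheta₂_term, hc]
      push_cast
      rw [this, exp_eq_neg _ (W1 + (-((π:ℂ) * (2 * (k:ℂ) + 1) * u)) * I) (-((k:ℤ)+1)) rfl]
      ring
    rw [mul_add, e1, e2, ← exp_pi_nat k, Complex.sin, hW]
    rw [Complex.exp_add, Complex.exp_add, Complex.exp_add, Complex.exp_add, Complex.exp_add,
      Complex.exp_add]
    ring
  simp only [h2] at h1
  rw [jacobiθ₁, ← tsum_mul_left, h1.tsum_eq]

lemma theta_differentiable (τ : ℂ) (hτ : 0 < τ.im) : Differentiable ℂ (jacobiθ₁ τ) := by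
  have : jacobiθ₁ τ = fun u => -I * cexp ((π : ℂ) * I * τ / 4) * cexp ((π : ℂ) * I * u) *
      jacobiTheta₂ (u + (1 + τ) / 2) τ := funext fun u => theta_eq_jacobiTheta₂ τ u hτ
  rw [this]
  intro u
  apply DifferentiableAt.mul
  · apply DifferentiableAt.mul (differentiableAt_const _)
    exact (Complex.differentiable_exp.comp ((differentiable_id.const_mul _))).differentiableAt
  · exact (differentiableAt_jacobiTheta₂_fst (u + (1 + τ) / 2) hτ).comp u
      (differentiableAt_id.add_const _)

lemma theta_add_one (τ u : ℂ) (hτ : 0 < τ.im) : jacobiθ₁ τ (u + 1) = -jacobiθ₁ τ u := by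
  rw [theta_eq_jacobiTheta₂ τ u hτ, theta_eq_jacobiTheta₂ τ (u+1) hτ,
    show u + 1 + (1 + τ) / 2 = (u + (1 + τ) / 2) + 1 by ring, jacobiTheta₂_add_left,
    exp_eq_neg ((π:ℂ) * I * (u+1)) ((π:ℂ) * I * u) 0 (by ring)]
  ring

lemma theta_add_tau (τ u : ℂ) (hτ : 0 < τ.im) :
    jacobiθ₁ τ (u + τ) = -cexp (-(π:ℂ) * I * τ - 2 * (π:ℂ) * I * u) * jacobiθ₁ τ u := by
  rw [theta_eq_jacobiTheta₂ τ u hτ, theta_eq_jacobiTheta₂ τ (u+τ) hτ,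
    show u + τ + (1 + τ) / 2 = (u + (1 + τ) / 2) + τ by ring, jacobiTheta₂_add_left']
  rw [show -I * cexp ((π:ℂ) * I * τ / 4) * cexp ((π:ℂ) * I * (u + τ)) *
      (cexp (-(π:ℂ) * I * (τ + 2 * (u + (1 + τ) / 2))) * jacobiTheta₂ (u + (1 + τ) / 2) τ)
      = -I * cexp ((π:ℂ) * I * τ / 4) *
        (cexp ((π:ℂ) * I * (u + τ)) * cexp (-(π:ℂ) * I * (τ + 2 * (u + (1 + τ) / 2)))) *
        jacobiTheta₂ (u + (1 + τ) / 2) τ by ring, ← Complex.exp_add]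
  rw [show -cexp (-(π:ℂ) * I * τ - 2 * (π:ℂ) * I * u) *
      (-I * cexp ((π:ℂ) * I * τ / 4) * cexp ((π:ℂ) * I * u) * jacobiTheta₂ (u + (1 + τ) / 2) τ)
      = -I * cexp ((π:ℂ) * I * τ / 4) *
        -(cexp (-(π:ℂ) * I * τ - 2 * (π:ℂ) * I * u) * cexp ((π:ℂ) * I * u)) *
        jacobiTheta₂ (u + (1 + τ) / 2) τ by ring, ← Complex.exp_add]
  rw [exp_eq_neg ((π:ℂ) * I * (u + τ) + -(π:ℂ) * I * (τ + 2 * (u + (1 + τ) / 2)))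
    (-(π:ℂ) * I * τ - 2 * (π:ℂ) * I * u + (π:ℂ) * I * u) (-1) (by ring)]

noncomputable def Nfun (τ u : ℂ) : ℂ :=
  (jacobiθ₁ τ (u + 1/6)) ^ 3 - (jacobiθ₁ τ (u - 1/6)) ^ 3 + (jacobiθ₁ τ (u - 1/2)) ^ 3

noncomputable def Dfun (τ u : ℂ) : ℂ :=
  jacobiθ₁ τ (u + 1/6) * jacobiθ₁ τ (u - 1/6) * jacobiθ₁ τ (u - 1/2)

lemma Nfun_differentiable (τ : ℂ) (hτ : 0 < τ.im) : Differentiable ℂ (Nfun τ) := by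
  have h := theta_differentiable τ hτ
  have h1 : ∀ c : ℂ, Differentiable ℂ (fun u => jacobiθ₁ τ (u + c)) :=
    fun c => h.comp (differentiable_id.add_const c)
  have h2 : ∀ c : ℂ, Differentiable ℂ (fun u => jacobiθ₁ τ (u - c)) :=
    fun c => h.comp (differentiable_id.sub_const c)
  exact (((h1 (1/6)).pow 3).sub ((h2 (1/6)).pow 3)).add ((h2 (1/2)).pow 3)

lemma Dfun_differentiable (τ : ℂ) (hτ : 0 < τ.im) : Differentiable ℂ (Dfun τ) := by
  have h := theta_differentiable τ hτ
  have h1 : ∀ c : ℂ, Differentiable ℂ (fun u => jacobiθ₁ τ (u + c)) :=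
    fun c => h.comp (differentiable_id.add_const c)
  have h2 : ∀ c : ℂ, Differentiable ℂ (fun u => jacobiθ₁ τ (u - c)) :=
    fun c => h.comp (differentiable_id.sub_const c)
  exact ((h1 (1/6)).mul (h2 (1/6))).mul (h2 (1/2))

lemma Nfun_add_third (τ u : ℂ) (hτ : 0 < τ.im) : Nfun τ (u + 1/3) = -Nfun τ u := by
  rw [Nfun, Nfun, show u + 1/3 + 1/6 = (u - 1/2) + 1 by ring, theta_add_one τ _ hτ,
    show u + 1/3 - 1/6 = u + 1/6 by ring, show u + 1/3 - 1/2 = u - 1/6 by ring]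
  ring

lemma Dfun_add_third (τ u : ℂ) (hτ : 0 < τ.im) : Dfun τ (u + 1/3) = -Dfun τ u := by
  rw [Dfun, Dfun, show u + 1/3 + 1/6 = (u - 1/2) + 1 by ring, theta_add_one τ _ hτ,
    show u + 1/3 - 1/6 = u + 1/6 by ring, show u + 1/3 - 1/2 = u - 1/6 by ring]
  ring

lemma Nfun_add_tau (τ u : ℂ) (hτ : 0 < τ.im) :
    Nfun τ (u + τ) = cexp (-3 * (π:ℂ) * I * τ - 6 * (π:ℂ) * I * u) * Nfun τ u := by
  rw [Nfun, Nfun, show u + τ + 1/6 = (u + 1/6) + τ by ring, show u + τ - 1/6 = (u - 1/6) + τ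
    by ring, show u + τ - 1/2 = (u - 1/2) + τ by ring, theta_add_tau τ _ hτ,
    theta_add_tau τ _ hτ, theta_add_tau τ _ hτ]
  have cube : ∀ A t : ℂ, (-cexp A * t) ^ 3 = -cexp (3 * A) * t ^ 3 := by
    intro A t
    rw [show (3:ℂ) * A = (3:ℕ) * A by push_cast; ring, Complex.exp_nat_mul]; ring
  rw [cube, cube, cube,
    exp_eq_neg (3 * (-(π:ℂ) * I * τ - 2 * (π:ℂ) * I * (u + 1/6)))
      (-3 * (π:ℂ) * I * τ - 6 * (π:ℂ) * I * u) (-1) (by push_cast; ring),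
    exp_eq_neg (3 * (-(π:ℂ) * I * τ - 2 * (π:ℂ) * I * (u - 1/6)))
      (-3 * (π:ℂ) * I * τ - 6 * (π:ℂ) * I * u) 0 (by push_cast; ring),
    exp_eq_neg (3 * (-(π:ℂ) * I * τ - 2 * (π:ℂ) * I * (u - 1/2)))
      (-3 * (π:ℂ) * I * τ - 6 * (π:ℂ) * I * u) 1 (by push_cast; ring)]
  ring

lemma Dfun_add_tau (τ u : ℂ) (hτ : 0 < τ.im) :
    Dfun τ (u + τ) = cexp (-3 * (π:ℂ) * I * τ - 6 * (π:ℂ) * I * u) * Dfun τ u := by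
  rw [Dfun, Dfun, show u + τ + 1/6 = (u + 1/6) + τ by ring, show u + τ - 1/6 = (u - 1/6) + τ
    by ring, show u + τ - 1/2 = (u - 1/2) + τ by ring, theta_add_tau τ _ hτ,
    theta_add_tau τ _ hτ, theta_add_tau τ _ hτ]
  rw [show -cexp (-(π:ℂ) * I * τ - 2 * (π:ℂ) * I * (u + 1/6)) * jacobiθ₁ τ (u + 1/6) *
      (-cexp (-(π:ℂ) * I * τ - 2 * (π:ℂ) * I * (u - 1/6)) * jacobiθ₁ τ (u - 1/6)) *
      (-cexp (-(π:ℂ) * I * τ - 2 * (π:ℂ) * I * (u - 1/2)) * jacobiθ₁ τ (u - 1/2)) =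
      -(cexp (-(π:ℂ) * I * τ - 2 * (π:ℂ) * I * (u + 1/6)) *
        cexp (-(π:ℂ) * I * τ - 2 * (π:ℂ) * I * (u - 1/6)) *
        cexp (-(π:ℂ) * I * τ - 2 * (π:ℂ) * I * (u - 1/2))) *
      (jacobiθ₁ τ (u + 1/6) * jacobiθ₁ τ (u - 1/6) * jacobiθ₁ τ (u - 1/2)) by ring,
    ← Complex.exp_add, ← Complex.exp_add,
    exp_eq_neg (-(π:ℂ) * I * τ - 2 * (π:ℂ) * I * (u + 1/6) +
        (-(π:ℂ) * I * τ - 2 * (π:ℂ) * I * (u - 1/6)) +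
        (-(π:ℂ) * I * τ - 2 * (π:ℂ) * I * (u - 1/2)))
      (-3 * (π:ℂ) * I * τ - 6 * (π:ℂ) * I * u) 0 (by ring)]
  ring

noncomputable def coefC (n : ℤ) (f : ℂ → ℂ) (y : ℝ) : ℂ :=
  ∫ x : ℝ in (0:ℝ)..(2/3 : ℝ), f (x + y * I) * cexp (-3 * (π:ℂ) * I * n * (x + y * I))

section coef

variable {f : ℂ → ℂ} (hf : Differentiable ℂ f) (hper : ∀ v : ℂ, f (v + 1/3) = -f v)

include hper in
lemma per23 : ∀ v : ℂ, f (v + 2/3) = f v := by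
  intro v
  rw [show v + 2/3 = v + 1/3 + 1/3 by ring, hper, hper, neg_neg]

include hf hper in
lemma coefC_eq (n : ℤ) (y : ℝ) : coefC n f y = coefC n f 0 := by
  set F : ℂ → ℂ := fun v => f v * cexp (-3 * (π:ℂ) * I * n * v) with hF
  have hFd : Differentiable ℂ F :=
    hf.mul (Complex.differentiable_exp.comp (differentiable_id.const_mul _))
  have hFper : ∀ v : ℂ, F (v + 2/3) = F v := by
    intro v
    simp only [hF]
    rw [per23 hper v,
      exp_eq_self (-3 * (π:ℂ) * I * n * (v + 2/3)) (-3 * (π:ℂ) * I * n * v) (-n)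
        (by push_cast; ring)]
  have hrect := Complex.integral_boundary_rect_eq_zero_of_differentiableOn F 0
    ((2/3 : ℝ) + (y : ℂ) * I) (hFd.differentiableOn)
  have hre0 : (0 : ℂ).re = (0:ℝ) := rfl
  have him0 : (0 : ℂ).im = (0:ℝ) := rfl
  have hreW : ((2/3 : ℝ) + (y : ℂ) * I).re = (2/3 : ℝ) := by simp
  have himW : ((2/3 : ℝ) + (y : ℂ) * I).im = y := by simp
  rw [hre0, him0, hreW, himW] at hrect
  have hvert : (∫ t : ℝ in (0:ℝ)..y, F ((2/3 : ℝ) + (t:ℂ) * I)) =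
      ∫ t : ℝ in (0:ℝ)..y, F ((0 : ℝ) + (t:ℂ) * I) := by
    apply intervalIntegral.integral_congr
    intro t _
    show F (((2/3 : ℝ) : ℂ) + (t:ℂ) * I) = F (((0:ℝ) : ℂ) + (t:ℂ) * I)
    rw [show ((2/3 : ℝ) : ℂ) + (t:ℂ) * I = (((0:ℝ) : ℂ) + (t:ℂ) * I) + 2/3 by push_cast; ring,
      hFper]
  rw [hvert] at hrect
  simp only [smul_eq_mul] at hrect
  have hmain : (∫ x : ℝ in (0:ℝ)..(2/3:ℝ), F ((x:ℂ) + ((0:ℝ):ℂ) * I)) =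
      ∫ x : ℝ in (0:ℝ)..(2/3:ℝ), F ((x:ℂ) + (y:ℂ) * I) := by
    linear_combination hrect
  simp only [coefC, hF]
  rw [← hmain]

include hf hper in
lemma coefC_even (m : ℤ) (y : ℝ) : coefC (2 * m) f y = 0 := by
  have hcont : Continuous (fun x : ℝ => f (↑x + ↑y * I) *
      cexp (-3 * (π:ℂ) * I * ((2*m : ℤ) : ℂ) * (↑x + ↑y * I))) := by
    have h1 : Continuous fun x : ℝ => (↑x : ℂ) + ↑y * I :=
      Complex.continuous_ofReal.add continuous_const
    exact (hf.continuous.comp h1).mul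
      (Complex.continuous_exp.comp (continuous_const.mul h1))
  have hint : ∀ a b : ℝ, IntervalIntegrable (fun x : ℝ => f (↑x + ↑y * I) *
      cexp (-3 * (π:ℂ) * I * ((2*m : ℤ) : ℂ) * (↑x + ↑y * I))) MeasureTheory.volume a b :=
    fun a b => hcont.intervalIntegrable a b
  have hflip : ∀ x : ℝ, f (↑(x + 1/3) + ↑y * I) *
        cexp (-3 * (π:ℂ) * I * ((2*m : ℤ) : ℂ) * (↑(x + 1/3) + ↑y * I))
      = -(f (↑x + ↑y * I) * cexp (-3 * (π:ℂ) * I * ((2*m : ℤ) : ℂ) * (↑x + ↑y * I))) := by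
    intro x
    rw [show (↑(x + 1/3) : ℂ) + ↑y * I = ((↑x : ℂ) + ↑y * I) + 1/3 by push_cast; ring, hper,
      exp_eq_self (-3 * (π:ℂ) * I * ((2*m : ℤ) : ℂ) * (((↑x : ℂ) + ↑y * I) + 1/3))
        (-3 * (π:ℂ) * I * ((2*m : ℤ) : ℂ) * ((↑x : ℂ) + ↑y * I)) (-m) (by push_cast; ring)]
    ring
  rw [coefC, ← intervalIntegral.integral_add_adjacent_intervals (hint 0 (1/3)) (hint (1/3) (2/3))]
  have h2 : (∫ x : ℝ in (1/3:ℝ)..(2/3:ℝ), f (↑x + ↑y * I) *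
        cexp (-3 * (π:ℂ) * I * ((2*m : ℤ) : ℂ) * (↑x + ↑y * I)))
      = ∫ x : ℝ in (0:ℝ)..(1/3:ℝ), f (↑(x + 1/3) + ↑y * I) *
        cexp (-3 * (π:ℂ) * I * ((2*m : ℤ) : ℂ) * (↑(x + 1/3) + ↑y * I)) := by
    rw [intervalIntegral.integral_comp_add_right (fun x : ℝ => f (↑x + ↑y * I) *
      cexp (-3 * (π:ℂ) * I * ((2*m : ℤ) : ℂ) * (↑x + ↑y * I))) (1/3)]
    norm_num
  rw [h2]
  have h3 : (∫ x : ℝ in (0:ℝ)..(1/3:ℝ), f (↑(x + 1/3) + ↑y * I) *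
        cexp (-3 * (π:ℂ) * I * ((2*m : ℤ) : ℂ) * (↑(x + 1/3) + ↑y * I)))
      = -∫ x : ℝ in (0:ℝ)..(1/3:ℝ), f (↑x + ↑y * I) *
        cexp (-3 * (π:ℂ) * I * ((2*m : ℤ) : ℂ) * (↑x + ↑y * I)) := by
    rw [← intervalIntegral.integral_neg]
    exact intervalIntegral.integral_congr fun x _ => hflip x
  rw [h3]
  ring

include hf hper in
lemma coefC_rec {τ : ℂ} (hτ : 0 < τ.im)
    (hq : ∀ v : ℂ, f (v + τ) = cexp (-3 * (π:ℂ) * I * τ - 6 * (π:ℂ) * I * v) * f v) (n : ℤ) :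
    coefC n f 0 = cexp (-3 * (π:ℂ) * I * ((n:ℂ) + 1) * τ) * coefC (n + 2) f 0 := by
  have hG : ∀ x : ℝ, f (↑(x + 2/3) + ((0:ℝ):ℂ) * I) *
        cexp (-3 * (π:ℂ) * I * ((n+2 : ℤ) : ℂ) * (↑(x + 2/3) + ((0:ℝ):ℂ) * I))
      = f (↑x + ((0:ℝ):ℂ) * I) *
        cexp (-3 * (π:ℂ) * I * ((n+2 : ℤ) : ℂ) * (↑x + ((0:ℝ):ℂ) * I)) := by
    intro x
    rw [show (↑(x + 2/3) : ℂ) + ((0:ℝ):ℂ) * I = ((↑x : ℂ) + ((0:ℝ):ℂ) * I) + 2/3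
        by push_cast; ring, per23 hper,
      exp_eq_self (-3 * (π:ℂ) * I * ((n+2 : ℤ) : ℂ) * (((↑x : ℂ) + ((0:ℝ):ℂ) * I) + 2/3))
        (-3 * (π:ℂ) * I * ((n+2 : ℤ) : ℂ) * ((↑x : ℂ) + ((0:ℝ):ℂ) * I)) (-(n+2))
        (by push_cast; ring)]
  have key : ∀ x : ℝ, f (↑x + (τ.im : ℂ) * I) * cexp (-3 * (π:ℂ) * I * (n:ℂ) * (↑x + (τ.im:ℂ) * I))
      = cexp (-3 * (π:ℂ) * I * ((n:ℂ) + 1) * τ) * (f (↑(x - τ.re) + ((0:ℝ):ℂ) * I) *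
        cexp (-3 * (π:ℂ) * I * ((n+2 : ℤ) : ℂ) * (↑(x - τ.re) + ((0:ℝ):ℂ) * I))) := by
    intro x
    have hxv : (↑x : ℂ) + (τ.im : ℂ) * I = (↑(x - τ.re) + ((0:ℝ):ℂ) * I) + τ := by
      apply Complex.ext <;> simp
    rw [hxv, hq]
    set w : ℂ := ↑(x - τ.re) + ((0:ℝ):ℂ) * I with hw
    rw [show cexp (-3 * (π:ℂ) * I * τ - 6 * (π:ℂ) * I * w) * f w *
        cexp (-3 * (π:ℂ) * I * (n:ℂ) * (w + τ)) = f w *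
        (cexp (-3 * (π:ℂ) * I * τ - 6 * (π:ℂ) * I * w) *
          cexp (-3 * (π:ℂ) * I * (n:ℂ) * (w + τ))) by ring,
      show cexp (-3 * (π:ℂ) * I * ((n:ℂ) + 1) * τ) * (f w *
        cexp (-3 * (π:ℂ) * I * ((n+2 : ℤ) : ℂ) * w)) = f w *
        (cexp (-3 * (π:ℂ) * I * ((n:ℂ) + 1) * τ) *
          cexp (-3 * (π:ℂ) * I * ((n+2 : ℤ) : ℂ) * w)) by ring,
      ← Complex.exp_add, ← Complex.exp_add]
    congr 2
    push_cast
    ring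
  rw [← coefC_eq hf hper n τ.im, coefC, coefC]
  rw [intervalIntegral.integral_congr (g := fun x : ℝ =>
      cexp (-3 * (π:ℂ) * I * ((n:ℂ) + 1) * τ) * (f (↑(x - τ.re) + ((0:ℝ):ℂ) * I) *
        cexp (-3 * (π:ℂ) * I * ((n+2 : ℤ) : ℂ) * (↑(x - τ.re) + ((0:ℝ):ℂ) * I))))
      (fun x _ => key x)]
  rw [intervalIntegral.integral_const_mul]
  congr 1
  rw [intervalIntegral.integral_comp_sub_right (fun x : ℝ => f (↑x + ((0:ℝ):ℂ) * I) *
      cexp (-3 * (π:ℂ) * I * ((n+2 : ℤ) : ℂ) * (↑x + ((0:ℝ):ℂ) * I))) τ.re]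
  have hper23 : Function.Periodic (fun x : ℝ => f (↑x + ((0:ℝ):ℂ) * I) *
      cexp (-3 * (π:ℂ) * I * ((n+2 : ℤ) : ℂ) * (↑x + ((0:ℝ):ℂ) * I))) (2/3) := fun x => hG x
  have := hper23.intervalIntegral_add_eq (0 - τ.re) 0
  rw [show (0:ℝ) - τ.re + 2/3 = 2/3 - τ.re by ring] at this
  rw [this, zero_add]

include hf hper in
lemma zero_of_coefC (hall : ∀ n : ℤ, coefC n f 0 = 0) : ∀ v : ℂ, f v = 0 := by
  haveI hT : Fact (0 < (2/3 : ℝ)) := ⟨by norm_num⟩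
  set g : ℝ → ℂ := fun x => f x with hg
  have hgc : Continuous g := hf.continuous.comp Complex.continuous_ofReal
  have hper23 := per23 hper
  have hgp : g 0 = g (0 + 2/3) := by
    simp only [hg]
    rw [show ((0 + 2/3 : ℝ) : ℂ) = ((0:ℝ):ℂ) + 2/3 by push_cast; ring, hper23]
  have hFc : Continuous (AddCircle.liftIco (2/3) 0 g) :=
    AddCircle.liftIco_continuous hgp hgc.continuousOn
  set Fc : C(AddCircle (2/3 : ℝ), ℂ) := ⟨AddCircle.liftIco (2/3) 0 g, hFc⟩ with hFcdef
  have hcoeff : ∀ n : ℤ, fourierCoeff (Fc : AddCircle (2/3:ℝ) → ℂ) n = 0 := by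
    intro n
    have h1 : fourierCoeff (AddCircle.liftIco (2/3) 0 g) n =
        fourierCoeffOn (lt_add_of_pos_right 0 hT.out) g n := fourierCoeff_liftIco_eq g n
    have h2 : fourierCoeffOn (lt_add_of_pos_right 0 hT.out) g n =
        (1 / (0 + 2/3 - 0) : ℂ) • ∫ x in (0:ℝ)..(0 + 2/3 : ℝ),
          (fourier (-n) (x : AddCircle (0 + 2/3 - 0 : ℝ))) • g x := by
      rw [fourierCoeffOn_eq_integral]
      norm_num
    have h3 : (∫ x in (0:ℝ)..(0 + 2/3 : ℝ),
          (fourier (-n) (x : AddCircle (0 + 2/3 - 0 : ℝ))) • g x) = coefC n f 0 := by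
      rw [coefC]
      rw [show (0 + 2/3 : ℝ) = (2/3 : ℝ) by norm_num]
      apply intervalIntegral.integral_congr
      intro x _
      simp only [smul_eq_mul, hg]
      rw [show ((x:ℝ):ℂ) + ((0:ℝ):ℂ) * I = ((x:ℝ):ℂ) by push_cast; ring,
        fourier_coe_apply, mul_comm]
      congr 1
      exact exp_eq_self _ _ 0 (by push_cast; ring)
    rw [hFcdef]
    simp only [ContinuousMap.coe_mk]
    rw [h1, h2, h3, hall n, smul_zero]
  have hsum : Summable (fourierCoeff (Fc : AddCircle (2/3:ℝ) → ℂ)) := by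
    rw [funext hcoeff]
    exact summable_zero
  have hFzero : ∀ t : AddCircle (2/3:ℝ), Fc t = 0 := by
    intro t
    have h := has_pointwise_sum_fourier_series_of_summable hsum t
    simp only [hcoeff, zero_smul] at h
    exact h.unique hasSum_zero
  have hreal : ∀ x : ℝ, x ∈ Set.Ico (0:ℝ) (2/3) → f x = 0 := by
    intro x hx
    have := hFzero (x : AddCircle (2/3:ℝ))
    rw [hFcdef] at this
    simp only [ContinuousMap.coe_mk] at this
    rwa [AddCircle.liftIco_coe_apply (by simpa using hx)] at this
  have hana : AnalyticOnNhd ℂ f Set.univ := hf.differentiableOn.analyticOnNhd isOpen_univ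
  have hseq : ∀ j : ℕ, 3 ≤ j → f (((1/3 + 1/(j+1) : ℝ) : ℂ)) = 0 := by
    intro j hj
    apply hreal
    have hj4 : (4:ℝ) ≤ (j:ℝ) + 1 := by
      have : (3:ℝ) ≤ (j:ℝ) := by exact_mod_cast hj
      linarith
    have hpos : (0:ℝ) < (j:ℝ) + 1 := by linarith
    have h4 : (1:ℝ)/((j:ℝ)+1) ≤ 1/4 := by
      rw [div_le_div_iff₀ hpos (by norm_num)]
      linarith
    constructor
    · positivity
    · linarith
  have htendR : Filter.Tendsto (fun j : ℕ => (1/3 + 1/((j:ℝ)+1) : ℝ)) Filter.atTop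
      (nhds (1/3 : ℝ)) := by
    have := tendsto_one_div_add_atTop_nhds_zero_nat.const_add (1/3 : ℝ)
    simpa using this
  have htendC : Filter.Tendsto (fun j : ℕ => (((1/3 + 1/((j:ℝ)+1) : ℝ)) : ℂ)) Filter.atTop
      (nhdsWithin (1/3 : ℂ) {(1/3 : ℂ)}ᶜ) := by
    apply tendsto_nhdsWithin_of_tendsto_nhds_of_eventually_within
    · have hco : Filter.Tendsto (fun x : ℝ => (x : ℂ)) (nhds (1/3 : ℝ)) (nhds ((1/3:ℝ) : ℂ)) :=
        Complex.continuous_ofReal.continuousAt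
      have h2c := hco.comp htendR
      rw [show ((1/3 : ℝ) : ℂ) = (1/3 : ℂ) by push_cast; ring] at h2c
      exact h2c
    · apply Filter.Eventually.of_forall
      intro j
      simp only [Set.mem_compl_iff, Set.mem_singleton_iff]
      intro hcontra
      have : (1/3 + 1/((j:ℝ)+1) : ℝ) = (1/3 : ℝ) := by
        have := hcontra
        rw [show (1/3 : ℂ) = ((1/3 : ℝ) : ℂ) by push_cast; ring] at this
        exact_mod_cast this
      have hpos : (0:ℝ) < 1/((j:ℝ)+1) := by positivity
      linarith
  have hfreq : ∃ᶠ z in nhdsWithin (1/3 : ℂ) {(1/3 : ℂ)}ᶜ, f z = 0 := by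
    apply htendC.frequently
    apply Filter.Eventually.frequently
    rw [Filter.eventually_atTop]
    exact ⟨3, fun j hj => hseq j hj⟩
  have heq := AnalyticOnNhd.eqOn_zero_of_preconnected_of_frequently_eq_zero hana
    isPreconnected_univ (Set.mem_univ (1/3 : ℂ)) hfreq
  exact fun v => heq (Set.mem_univ v)

include hf hper in
lemma key_zero {τ : ℂ} (hτ : 0 < τ.im)
    (hq : ∀ v : ℂ, f (v + τ) = cexp (-3 * (π:ℂ) * I * τ - 6 * (π:ℂ) * I * v) * f v)
    (h1 : coefC 1 f 0 = 0) : ∀ v : ℂ, f v = 0 := by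
  have up : ∀ m : ℕ, coefC (1 + 2 * (m:ℤ)) f 0 = 0 := by
    intro m
    induction m with
    | zero => simpa using h1
    | succ m ih =>
      have hrec := coefC_rec hf hper hτ hq (1 + 2 * (m:ℤ))
      rw [ih] at hrec
      have hne : cexp (-3 * (π:ℂ) * I * (((1 + 2 * (m:ℤ) : ℤ):ℂ) + 1) * τ) ≠ 0 :=
        Complex.exp_ne_zero _
      have := (mul_eq_zero.mp hrec.symm).resolve_left hne
      rw [show (1 + 2 * ((m + 1 : ℕ) : ℤ)) = (1 + 2 * (m:ℤ)) + 2 by push_cast; ring]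
      exact this
  have down : ∀ m : ℕ, coefC (1 - 2 * (m:ℤ)) f 0 = 0 := by
    intro m
    induction m with
    | zero => simpa using h1
    | succ m ih =>
      have hrec := coefC_rec hf hper hτ hq (1 - 2 * ((m:ℤ) + 1))
      rw [show (1 - 2*((m:ℤ)+1) + 2) = 1 - 2*(m:ℤ) by ring, ih, mul_zero] at hrec
      rw [show (1 - 2 * ((m + 1 : ℕ) : ℤ)) = 1 - 2*((m:ℤ)+1) by push_cast; ring]
      exact hrec
  have hall : ∀ n : ℤ, coefC n f 0 = 0 := by
    intro n
    rcases Int.even_or_odd n with ⟨m, hm⟩ | ⟨m, hm⟩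
    · rw [hm, show m + m = 2 * m by ring]
      exact coefC_even hf hper m 0
    · rcases le_or_gt 0 m with hge | hlt
      · obtain ⟨k, rfl⟩ := Int.eq_ofNat_of_zero_le hge
        rw [hm, show 2 * ((k:ℤ)) + 1 = 1 + 2 * (k:ℤ) by ring]
        exact up k
      · have hmge : 0 ≤ -m := by omega
        obtain ⟨k, hk⟩ := Int.eq_ofNat_of_zero_le hmge
        rw [hm, show 2 * m + 1 = 1 - 2 * (-m) by ring, hk]
        exact down k
  exact zero_of_coefC hf hper hall

end coef

lemma coefC_sub_mul (a b : ℂ) (f₁ f₂ : ℂ → ℂ) (hc1 : Continuous f₁) (hc2 : Continuous f₂)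
    (n : ℤ) (y : ℝ) :
    coefC n (fun v => a * f₁ v - b * f₂ v) y = a * coefC n f₁ y - b * coefC n f₂ y := by
  have h1 : Continuous fun x : ℝ => (↑x : ℂ) + (y:ℂ) * I :=
    Complex.continuous_ofReal.add continuous_const
  have hi : ∀ g : ℂ → ℂ, Continuous g → ∀ c : ℂ, IntervalIntegrable
      (fun x : ℝ => c * (g (↑x + (y:ℝ) * I) * cexp (-3 * (π:ℂ) * I * (n:ℂ) * (↑x + (y:ℝ) * I))))
      MeasureTheory.volume 0 (2/3) := by
    intro g hg c
    apply Continuous.intervalIntegrable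
    exact continuous_const.mul ((hg.comp h1).mul
      (Complex.continuous_exp.comp (continuous_const.mul h1)))
  rw [coefC, coefC, coefC, ← intervalIntegral.integral_const_mul,
    ← intervalIntegral.integral_const_mul,
    ← intervalIntegral.integral_sub (hi _ hc1 a) (hi _ hc2 b)]
  apply intervalIntegral.integral_congr
  intro x _
  ring

lemma ND_cross (τ : ℂ) (hτ : 0 < τ.im) (w : ℂ) (hDw : Dfun τ w ≠ 0) (u u' : ℂ) :
    Nfun τ u * Dfun τ u' = Nfun τ u' * Dfun τ u := by
  have hNd := Nfun_differentiable τ hτ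
  have hDd := Dfun_differentiable τ hτ
  have hNper : ∀ v : ℂ, Nfun τ (v + 1/3) = -Nfun τ v := fun v => Nfun_add_third τ v hτ
  have hDper : ∀ v : ℂ, Dfun τ (v + 1/3) = -Dfun τ v := fun v => Dfun_add_third τ v hτ
  have hNq : ∀ v : ℂ, Nfun τ (v + τ) = cexp (-3 * (π:ℂ) * I * τ - 6 * (π:ℂ) * I * v) * Nfun τ v :=
    fun v => Nfun_add_tau τ v hτ
  have hDq : ∀ v : ℂ, Dfun τ (v + τ) = cexp (-3 * (π:ℂ) * I * τ - 6 * (π:ℂ) * I * v) * Dfun τ v :=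
    fun v => Dfun_add_tau τ v hτ
  have hβ : coefC 1 (Dfun τ) 0 ≠ 0 := by
    intro h0
    exact hDw (key_zero hDd hDper hτ hDq h0 w)
  have hgd : Differentiable ℂ (fun v => coefC 1 (Dfun τ) 0 * Nfun τ v -
      coefC 1 (Nfun τ) 0 * Dfun τ v) := ((hNd.const_mul _).sub (hDd.const_mul _))
  have hgper : ∀ v : ℂ, (fun v => coefC 1 (Dfun τ) 0 * Nfun τ v -
      coefC 1 (Nfun τ) 0 * Dfun τ v) (v + 1/3) = -(fun v => coefC 1 (Dfun τ) 0 * Nfun τ v -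
      coefC 1 (Nfun τ) 0 * Dfun τ v) v := by
    intro v; simp only; rw [hNper, hDper]; ring
  have hgq : ∀ v : ℂ, (fun v => coefC 1 (Dfun τ) 0 * Nfun τ v -
      coefC 1 (Nfun τ) 0 * Dfun τ v) (v + τ) = cexp (-3 * (π:ℂ) * I * τ - 6 * (π:ℂ) * I * v) *
      (fun v => coefC 1 (Dfun τ) 0 * Nfun τ v - coefC 1 (Nfun τ) 0 * Dfun τ v) v := by
    intro v; simp only; rw [hNq, hDq]; ring
  have hlin : coefC 1 (fun v => coefC 1 (Dfun τ) 0 * Nfun τ v -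
      coefC 1 (Nfun τ) 0 * Dfun τ v) 0 = 0 := by
    rw [coefC_sub_mul _ _ _ _ hNd.continuous hDd.continuous 1 0]
    ring
  have hg0 := key_zero hgd hgper hτ hgq hlin
  have e1 := hg0 u
  have e2 := hg0 u'
  apply mul_left_cancel₀ hβ
  linear_combination (Dfun τ u') * e1 - (Dfun τ u) * e2

lemma exp_half_pi : cexp (((π:ℂ)/2) * I) = I := by
  rw [Complex.exp_mul_I, Complex.cos_pi_div_two, Complex.sin_pi_div_two]
  ring

lemma Pfun_eq_ND (τ u : ℂ) (hx : jacobiθ₁ τ (u + 1/6) ≠ 0) (hy : jacobiθ₁ τ (u - 1/6) ≠ 0)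
    (hz : jacobiθ₁ τ (u - 1/2) ≠ 0) : Pfun τ u = Nfun τ u / Dfun τ u := by
  have hm : cexp (3 * (π:ℂ) * I * (-(1/6))) = -I := by
    rw [show 3 * (π:ℂ) * I * (-(1/6)) = -(((π:ℂ)/2) * I) by ring, Complex.exp_neg, exp_half_pi,
      Complex.inv_I]
  have hp : cexp (3 * (π:ℂ) * I * (1/6)) = I := by
    rw [show 3 * (π:ℂ) * I * (1/6) = ((π:ℂ)/2) * I by ring, exp_half_pi]
  have hh : cexp (3 * (π:ℂ) * I * (1/2)) = -I := by
    rw [show 3 * (π:ℂ) * I * (1/2) = ((π:ℂ)/2) * I + (π:ℂ) * I by ring, Complex.exp_add,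
      exp_half_pi, Complex.exp_pi_mul_I]
    ring
  rw [Pfun, Hfun, Hfun, Hfun, Nfun, Dfun, show u - (-(1/6) : ℂ) = u + 1/6 by ring, hm, hp, hh]
  set X := jacobiθ₁ τ (u + 1/6) with hX
  set Y := jacobiθ₁ τ (u - 1/6) with hY
  set Z := jacobiθ₁ τ (u - 1/2) with hZ
  field_simp
  rw [Complex.I_sq]
  ring

/-- `𝔓` is constant: for all `u, u′` at which `θ₁(· − w) ≠ 0` for each
`w ∈ {−1/6, 1/6, 1/2}`, one has `𝔓(u) = 𝔓(u′)`. -/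
theorem conifold_stmt17 (τ : ℂ) (hτ : 0 < τ.im) (u u' : ℂ)
    (hu : ∀ w ∈ ({-(1 / 6), 1 / 6, 1 / 2} : Set ℂ), jacobiθ₁ τ (u - w) ≠ 0)
    (hu' : ∀ w ∈ ({-(1 / 6), 1 / 6, 1 / 2} : Set ℂ), jacobiθ₁ τ (u' - w) ≠ 0) :
    Pfun τ u = Pfun τ u' := by
  have m1 : (-(1/6) : ℂ) ∈ ({-(1 / 6), 1 / 6, 1 / 2} : Set ℂ) := by simp
  have m2 : ((1/6) : ℂ) ∈ ({-(1 / 6), 1 / 6, 1 / 2} : Set ℂ) := by simp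
  have m3 : ((1/2) : ℂ) ∈ ({-(1 / 6), 1 / 6, 1 / 2} : Set ℂ) := by simp
  have hx := hu _ m1; have hy := hu _ m2; have hz := hu _ m3
  have hx' := hu' _ m1; have hy' := hu' _ m2; have hz' := hu' _ m3
  rw [show u - (-(1/6) : ℂ) = u + 1/6 by ring] at hx
  rw [show u' - (-(1/6) : ℂ) = u' + 1/6 by ring] at hx'
  have hDu : Dfun τ u ≠ 0 := mul_ne_zero (mul_ne_zero hx hy) hz
  have hDu' : Dfun τ u' ≠ 0 := mul_ne_zero (mul_ne_zero hx' hy') hz'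
  rw [Pfun_eq_ND τ u hx hy hz, Pfun_eq_ND τ u' hx' hy' hz',
    div_eq_div_iff hDu hDu']
  exact ND_cross τ hτ u hDu u u'
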